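/- Let G = (V,E) be a finite simple graph, m ≥ 3 an integer, and for each vertex v let σ(v) ∈ {1,…,m−2}, and let O be an acyclic orientation of G compatible with σ (i.e., u → w in O implies σ(u) ≥ σ(w)). Then there exists x ∈ (0, m−2)^V with x_u ≠ x_w for every edge {u,w}, x_v ∉ ℤ for all v, ⌈x_v⌉ = σ(v) for all v, and x_u > x_w whenever u → w in O. -/
import Mathlib


open SimpleGraph Polynomial

/-- `r` is an orientation of the simple graph `G`: every directed edge lies over an
edge of `G`, and every edge of `G` gets exactly one of its two directions. -/
def IsOrientation {V : Type*} (G : SimpleGraph V) (r : V → V → Prop) : Prop :=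
  (∀ u v, r u v → G.Adj u v) ∧ (∀ u v, G.Adj u v → (r u v ↔ ¬ r v u))

/-- A directed relation is acyclic if it has no directed cycles. -/
def IsAcyclicRel {V : Type*} (r : V → V → Prop) : Prop :=
  ∀ v, ¬ Relation.TransGen r v v

/-- The number of acyclic orientations of `G`. -/
noncomputable def acyclicOrientationCount {V : Type*} (G : SimpleGraph V) : ℕ :=
  Nat.card {r : V → V → Prop // IsOrientation G r ∧ IsAcyclicRel r}

/-- Given an acyclic orientation `r` of `G` and a compatible coloring
`σ : V → {1,…,m-2}`, there is a point `x ∈ (0,m-2)^V` with non-equal coordinates across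
edges, no integral coordinates, `⌈x_v⌉ = σ(v)`, and `x_u > x_w` whenever `u → w`. -/
theorem exists_point_realizing_pair {V : Type*} [Fintype V] (G : SimpleGraph V)
    (m : ℕ) (hm : 3 ≤ m) (r : V → V → Prop) (ho : IsOrientation G r)
    (ha : IsAcyclicRel r) (σ : V → ℤ) (hσ : ∀ v, 1 ≤ σ v ∧ σ v ≤ (m : ℤ) - 2)
    (hcomp : ∀ u w, r u w → σ w ≤ σ u) :
    ∃ x : V → ℝ, (∀ v, 0 < x v ∧ x v < (m : ℝ) - 2) ∧
      (∀ u w, G.Adj u w → x u ≠ x w) ∧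
      (∀ v, ∀ i : ℤ, x v ≠ (i : ℝ)) ∧
      (∀ v, ⌈x v⌉ = σ v) ∧
      (∀ u w, r u w → x w < x u) := by
  classical
  set n : ℕ := Fintype.card V with hn
  -- rank: number of strict descendants
  let ρ : V → ℕ := fun v => (Finset.univ.filter (fun w => Relation.TransGen r v w)).card
  have hρlt : ∀ u w, r u w → ρ w < ρ u := by
    intro u w huw
    apply Finset.card_lt_card
    constructor
    · intro z hz
      simp only [Finset.mem_filter, Finset.mem_univ, true_and] at hz ⊢
      exact Relation.TransGen.head huw hz
    · intro hsub
      have hw : w ∈ Finset.univ.filter (fun z => Relation.TransGen r u z) := by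
        simp only [Finset.mem_filter, Finset.mem_univ, true_and]
        exact Relation.TransGen.single huw
      have := hsub hw
      simp only [Finset.mem_filter, Finset.mem_univ, true_and] at this
      exact ha w this
  have hρle : ∀ v, ρ v ≤ n := fun v => by
    simpa [hn] using Finset.card_filter_le Finset.univ (fun w => Relation.TransGen r v w)
  set f : V → ℝ := fun v => ((ρ v : ℝ) + 1) / ((n : ℝ) + 2) with hf
  have hden : (0:ℝ) < (n : ℝ) + 2 := by positivity
  have hf0 : ∀ v, 0 < f v := fun v => by positivity
  have hf1 : ∀ v, f v < 1 := by
    intro v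
    rw [hf, div_lt_one hden]
    have h' : (ρ v : ℝ) ≤ (n : ℝ) := by exact_mod_cast hρle v
    linarith
  have hfmono : ∀ u w, ρ w < ρ u → f w < f u := by
    intro u w h
    rw [hf, div_lt_div_iff_of_pos_right hden]
    have : (ρ w : ℝ) < (ρ u : ℝ) := by exact_mod_cast h
    linarith
  set x : V → ℝ := fun v => (σ v : ℝ) - 1 + f v with hx
  have hlow : ∀ v, (σ v : ℝ) - 1 < x v := fun v => by
    have := hf0 v; simp only [hx]; linarith
  have hhigh : ∀ v, x v < (σ v : ℝ) := fun v => by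
    have := hf1 v; simp only [hx]; linarith
  have hceil : ∀ v, ⌈x v⌉ = σ v := by
    intro v
    rw [Int.ceil_eq_iff]
    constructor
    · exact_mod_cast hlow v
    · exact le_of_lt (hhigh v)
  have hmono : ∀ u w, r u w → x w < x u := by
    intro u w huw
    rcases lt_or_eq_of_le (hcomp u w huw) with h | h
    · have h1 : (σ w : ℝ) + 1 ≤ (σ u : ℝ) := by exact_mod_cast h
      have := hhigh w; have := hlow u
      linarith
    · have hff := hfmono u w (hρlt u w huw)
      simp only [hx, h]
      linarith
  refine ⟨x, ?_, ?_, ?_, hceil, hmono⟩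
  · intro v
    have h1 := (hσ v).1
    have h2 := (hσ v).2
    have h1' : (1:ℝ) ≤ (σ v : ℝ) := by exact_mod_cast h1
    have h2' : (σ v : ℝ) ≤ (m : ℝ) - 2 := by exact_mod_cast h2
    exact ⟨by linarith [hlow v], lt_of_lt_of_le (hhigh v) h2'⟩
  · intro u w hadj
    by_cases h : r u w
    · exact (hmono u w h).ne'
    · have : r w u := by
        by_contra h2
        exact h ((ho.2 u w hadj).mpr h2)
      exact (hmono w u this).ne
  · intro v i h
    have h1 : ⌈x v⌉ = i := by rw [h]; exact Int.ceil_intCast i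
    have h2 : (i : ℝ) = (σ v : ℝ) := by exact_mod_cast h1.symm.trans (hceil v)
    have := hhigh v
    rw [h, h2] at this
    exact lt_irrefl _ this
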